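/- Furthermore, in the situation above, if additionally all non-simple components Y_{λ'} with λ' < λ_0 are zero and {μ_1} + {μ_2} + Π = {λ_0} (meaning μ_1 + μ_2 + α is a root only for one simple root α = λ_i, giving λ_0), then the g_{λ_0}-component of e^{ad(−Z_2)}e^{ad(−Z_1)}e^{ad Z_2}e^{ad Z_1}(Y) equals [[Z_2, Z_1], Y_{λ_i}] + Y_{λ_0}. -/

import Mathlib

open Finset

/-!
Put `a = ad Z₁` and `b = ad Z₂`. Both are nilpotent, so the truncated exponentials are honest
exponentials, `e^{-a} e^{a} = 1 = e^{-b} e^{b}`, and the group commutator becomes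
`e^{-b} e^{-a} e^{b} e^{a} = 1 + e^{-b} (e^{-a} e^{b} - e^{b} e^{-a}) e^{a}`.
Expanding, the second summand is a combination of words
`(-b)^{r₄} ((-a)^{r₃} b^{r₂} - b^{r₂} (-a)^{r₃}) a^{r₁}`, which vanish unless `r₂, r₃ ≥ 1` and
map `g_l` into `g_{l + (r₁ + r₃) μ₁ + (r₂ + r₄) μ₂}`. Grouping the terms by weight gives the
components. By comparing heights, a word contributes to `l₀ = μ₁ + μ₂ + λ_i` only for
`r₂ = r₃ = 1`, `r₁ = r₄ = 0` and a simple root `l`, which must be `λ_i`; that word is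
`[ad Z₂, ad Z₁] = ad [Z₂, Z₁]`.
-/

theorem mul_mul_mul_eq_one_add_of_mul_eq_one {A : Type*} [Ring A] {p p' q q' : A}
    (hq : q' * q = 1) (hp : p' * p = 1) :
    q' * p' * q * p = 1 + q' * (p' * q - q * p') * p := by
  have hcancel : q' * (q * p') * p = 1 := by
    rw [← mul_assoc, hq, one_mul, hp]
  rw [mul_sub, sub_mul, hcancel]
  noncomm_ring

section TruncatedExp

variable (𝕜 : Type*) [Field 𝕜] {A : Type*} [Ring A] [Algebra 𝕜 A]

def truncExp (a : A) (m : ℕ) : A := ∑ r ∈ range m, (r.factorial : 𝕜)⁻¹ • a ^ r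

def conjCoeff (r : ℕ × ℕ × ℕ × ℕ) : 𝕜 :=
  (r.1.factorial : 𝕜)⁻¹ * (r.2.1.factorial : 𝕜)⁻¹ * (r.2.2.1.factorial : 𝕜)⁻¹ *
    (r.2.2.2.factorial : 𝕜)⁻¹

variable {𝕜}

def conjWord (a b c d : A) (r : ℕ × ℕ × ℕ × ℕ) : A :=
  d ^ r.1 * (c ^ r.2.1 * b ^ r.2.2.1 - b ^ r.2.2.1 * c ^ r.2.1) * a ^ r.2.2.2

theorem conjWord_eq_zero {a b c d : A} {r : ℕ × ℕ × ℕ × ℕ} (hr : r.2.1 = 0 ∨ r.2.2.1 = 0) :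
    conjWord a b c d r = 0 := by
  rcases hr with hr | hr <;> simp [conjWord, hr]

theorem truncExp_neg_mul_truncExp [CharZero 𝕜] {a : A} {m : ℕ} (ha : a ^ m = 0) :
    truncExp 𝕜 (-a) m * truncExp 𝕜 a m = 1 := by
  let _ : Module ℚ A := Module.compHom A (algebraMap ℚ 𝕜)
  have hexp : ∀ b : A, b ^ m = 0 → truncExp 𝕜 b m = IsNilpotent.exp b := fun b hb => by
    rw [IsNilpotent.exp_eq_sum hb]
    refine sum_congr rfl fun r _ => ?_
    change _ = algebraMap ℚ 𝕜 (r.factorial : ℚ)⁻¹ • b ^ r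
    simp
  rw [hexp a ha, hexp (-a) (by rw [neg_pow, ha, mul_zero]),
    IsNilpotent.exp_neg_mul_exp_self ⟨m, ha⟩]

theorem truncExp_mul_commutator_mul_truncExp (a b c d : A) (m : ℕ) :
    truncExp 𝕜 d m * (truncExp 𝕜 c m * truncExp 𝕜 b m - truncExp 𝕜 b m * truncExp 𝕜 c m) *
        truncExp 𝕜 a m =
      ∑ r ∈ range m ×ˢ range m ×ˢ range m ×ˢ range m, conjCoeff 𝕜 r • conjWord a b c d r := by
  have hcomm : truncExp 𝕜 c m * truncExp 𝕜 b m - truncExp 𝕜 b m * truncExp 𝕜 c m =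
      ∑ r₃ ∈ range m, ∑ r₂ ∈ range m, ((r₃.factorial : 𝕜)⁻¹ * (r₂.factorial : 𝕜)⁻¹) •
        (c ^ r₃ * b ^ r₂ - b ^ r₂ * c ^ r₃) := by
    simp only [truncExp, sum_mul_sum, smul_mul_smul_comm, smul_sub]
    nth_rewrite 2 [sum_comm]
    simp only [← sum_sub_distrib, mul_comm]
  rw [hcomm, mul_assoc]
  simp only [truncExp, sum_mul]
  simp only [mul_sum, sum_product, smul_mul_assoc, mul_smul_comm, smul_smul, mul_assoc]
  refine sum_congr rfl fun _ _ => sum_congr rfl fun _ _ => sum_congr rfl fun _ _ =>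
    sum_congr rfl fun _ _ => ?_
  simp only [conjCoeff, conjWord, mul_assoc]
  congr 1
  ring

theorem truncExp_conj_eq_one_add_sum [CharZero 𝕜] {a b : A} {m : ℕ} (ha : a ^ m = 0)
    (hb : b ^ m = 0) :
    truncExp 𝕜 (-b) m * truncExp 𝕜 (-a) m * truncExp 𝕜 b m * truncExp 𝕜 a m =
      1 + ∑ r ∈ range m ×ˢ range m ×ˢ range m ×ˢ range m,
        conjCoeff 𝕜 r • conjWord a b (-a) (-b) r := by
  rw [mul_mul_mul_eq_one_add_of_mul_eq_one (truncExp_neg_mul_truncExp hb)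
    (truncExp_neg_mul_truncExp ha), truncExp_mul_commutator_mul_truncExp]

theorem truncExp_conj_apply_sum [CharZero 𝕜] {M : Type*} [AddCommGroup M] [Module 𝕜 M]
    {a b : Module.End 𝕜 M} {m : ℕ} (ha : a ^ m = 0) (hb : b ^ m = 0) {ι : Type*} (s : Finset ι)
    (y : ι → M) :
    (truncExp 𝕜 (-b) m * truncExp 𝕜 (-a) m * truncExp 𝕜 b m * truncExp 𝕜 a m) (∑ i ∈ s, y i) =
      ∑ i ∈ s, y i + ∑ i ∈ s ×ˢ (range m ×ˢ range m ×ˢ range m ×ˢ range m),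
        conjCoeff 𝕜 i.2 • conjWord a b (-a) (-b) i.2 (y i.1) := by
  rw [truncExp_conj_eq_one_add_sum ha hb, LinearMap.add_apply, Module.End.one_apply,
    LinearMap.sum_apply, sum_product_right (s := s)]
  congr 1
  refine sum_congr rfl fun r _ => ?_
  rw [LinearMap.smul_apply, map_sum, smul_sum]

end TruncatedExp

section Adjoint

variable {𝕜 L : Type*} [Field 𝕜] [LieRing L] [LieAlgebra 𝕜 L]

theorem ad_pow_eq_zero {Z : L} {m : ℕ} (h : ∀ w : L, (fun w => ⁅Z, w⁆)^[m] w = 0) :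
    LieAlgebra.ad 𝕜 L Z ^ m = 0 :=
  LinearMap.ext fun w => by
    rw [LinearMap.zero_apply, Module.End.pow_apply]
    exact h w

theorem sum_iterate_lie_eq_truncExp_apply (Z y : L) (m : ℕ) :
    ∑ r ∈ range m, (r.factorial : 𝕜)⁻¹ • (fun w => ⁅Z, w⁆)^[r] y =
      truncExp 𝕜 (LieAlgebra.ad 𝕜 L Z) m y := by
  simp only [truncExp, LinearMap.sum_apply, LinearMap.smul_apply, Module.End.coe_pow]
  rfl

theorem conjWord_lie_apply (Z₁ Z₂ y : L) :
    conjWord (LieAlgebra.ad 𝕜 L Z₁) (LieAlgebra.ad 𝕜 L Z₂) (-LieAlgebra.ad 𝕜 L Z₁)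
      (-LieAlgebra.ad 𝕜 L Z₂) (0, 1, 1, 0) y = ⁅⁅Z₂, Z₁⁆, y⁆ := by
  simp only [conjWord, pow_zero, pow_one, one_mul, mul_one, LinearMap.sub_apply,
    Module.End.mul_apply, LinearMap.neg_apply, LieAlgebra.ad_apply, lie_neg, lie_lie]
  abel

end Adjoint

section Grading

variable {R V L : Type*} [CommRing R] [LieRing L] [LieAlgebra R L]
  (Λp : Finset V) (g : V → Submodule R L)

def HasWeight (x : L) (v : V) : Prop := (v ∈ Λp → x ∈ g v) ∧ (v ∉ Λp → x = 0)

variable {Λp g}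

theorem hasWeight_of_mem {x : L} {v : V} (hv : v ∈ Λp) (hx : x ∈ g v) : HasWeight Λp g x v :=
  ⟨fun _ => hx, fun h => absurd hv h⟩

theorem hasWeight_zero (v : V) : HasWeight Λp g 0 v :=
  ⟨fun _ => zero_mem _, fun _ => rfl⟩

theorem HasWeight.smul {x : L} {v : V} (hx : HasWeight Λp g x v) (c : R) :
    HasWeight Λp g (c • x) v :=
  ⟨fun h => Submodule.smul_mem _ c (hx.1 h), fun h => by rw [hx.2 h, smul_zero]⟩

theorem HasWeight.sub {x y : L} {v : V} (hx : HasWeight Λp g x v) (hy : HasWeight Λp g y v) :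
    HasWeight Λp g (x - y) v :=
  ⟨fun h => sub_mem (hx.1 h) (hy.1 h), fun h => by rw [hx.2 h, hy.2 h, sub_zero]⟩

theorem sum_filter_weight_mem [DecidableEq V] {ι : Type*} {s : Finset ι} {f : ι → L}
    {wt : ι → V}
    (hf : ∀ i ∈ s, HasWeight Λp g (f i) (wt i)) {l : V} (hl : l ∈ Λp) :
    ∑ i ∈ s with wt i = l, f i ∈ g l :=
  Submodule.sum_mem _ fun i hi => by
    obtain ⟨his, rfl⟩ := mem_filter.1 hi
    exact (hf i his).1 hl

theorem sum_sum_filter_weight [DecidableEq V] {ι : Type*} {s : Finset ι} {f : ι → L}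
    {wt : ι → V}
    (hf : ∀ i ∈ s, HasWeight Λp g (f i) (wt i)) :
    ∑ l ∈ Λp, ∑ i ∈ s with wt i = l, f i = ∑ i ∈ s, f i := by
  rw [sum_fiberwise_eq_sum_filter]
  exact sum_filter_of_ne fun i hi hne => by_contra fun h => hne ((hf i hi).2 h)

variable [AddCommMonoid V]

def conjWeight (α β : V) (r : ℕ × ℕ × ℕ × ℕ) : V :=
  r.1 • β + (r.2.1 • α + r.2.2.1 • β) + r.2.2.2 • α

variable (Λp g) in
def ShiftsWeight (T : Module.End R L) (ν : V) : Prop :=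
  ∀ x v, HasWeight Λp g x v → HasWeight Λp g (T x) (ν + v)

theorem shiftsWeight_ad
    (hbr : ∀ a b : V, a ∈ Λp → b ∈ Λp → ∀ x ∈ g a, ∀ y ∈ g b,
      (a + b ∈ Λp → ⁅x, y⁆ ∈ g (a + b)) ∧ (a + b ∉ Λp → ⁅x, y⁆ = (0 : L)))
    {μ : V} {Z : L} (hμ : μ ∈ Λp) (hZ : Z ∈ g μ) :
    ShiftsWeight Λp g (LieAlgebra.ad R L Z) μ := by
  intro x v hx
  by_cases hv : v ∈ Λp
  · exact hbr μ v hμ hv Z hZ x (hx.1 hv)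
  · rw [LieAlgebra.ad_apply, hx.2 hv, lie_zero]
    exact hasWeight_zero _

theorem ShiftsWeight.one : ShiftsWeight Λp g 1 0 := fun x v hx => by
  rwa [zero_add]

theorem ShiftsWeight.mul {S T : Module.End R L} {ν ν' : V} (hS : ShiftsWeight Λp g S ν)
    (hT : ShiftsWeight Λp g T ν') : ShiftsWeight Λp g (S * T) (ν + ν') := fun x v hx => by
  rw [add_assoc]
  exact hS _ _ (hT x v hx)

theorem ShiftsWeight.pow {T : Module.End R L} {ν : V} (hT : ShiftsWeight Λp g T ν) (r : ℕ) :
    ShiftsWeight Λp g (T ^ r) (r • ν) := by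
  induction r with
  | zero => rw [pow_zero, zero_smul]; exact .one
  | succ r ih => rw [pow_succ, succ_nsmul]; exact ih.mul hT

theorem ShiftsWeight.sub {S T : Module.End R L} {ν : V} (hS : ShiftsWeight Λp g S ν)
    (hT : ShiftsWeight Λp g T ν) : ShiftsWeight Λp g (S - T) ν := fun x v hx =>
  (hS x v hx).sub (hT x v hx)

theorem ShiftsWeight.neg {T : Module.End R L} {ν : V} (hT : ShiftsWeight Λp g T ν) :
    ShiftsWeight Λp g (-T) ν := fun x v hx => by
  simpa using (hT x v hx).smul (-1)

theorem ShiftsWeight.conjWord {a b c d : Module.End R L} {α β : V}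
    (ha : ShiftsWeight Λp g a α) (hb : ShiftsWeight Λp g b β) (hc : ShiftsWeight Λp g c α)
    (hd : ShiftsWeight Λp g d β) (r : ℕ × ℕ × ℕ × ℕ) :
    ShiftsWeight Λp g (conjWord a b c d r) (conjWeight α β r) := by
  refine ((hd.pow _).mul (((hc.pow _).mul (hb.pow _)).sub ?_)).mul (ha.pow _)
  rw [add_comm]
  exact (hb.pow _).mul (hc.pow _)

end Grading

theorem counts_eq_of_height_eq {h₁ h₂ k r₄ r₃ r₂ r₁ : ℕ} (hh₁ : 0 < h₁) (hh₂ : 0 < h₂)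
    (hk : 0 < k) (h₃ : r₃ ≠ 0) (h₂' : r₂ ≠ 0)
    (h : r₄ * h₂ + (r₃ * h₁ + r₂ * h₂) + r₁ * h₁ + k = h₁ + h₂ + 1) :
    r₄ = 0 ∧ r₃ = 1 ∧ r₂ = 1 ∧ r₁ = 0 ∧ k = 1 := by
  obtain ⟨a, rfl⟩ := Nat.exists_eq_add_one.2 (Nat.pos_of_ne_zero h₃)
  obtain ⟨b, rfl⟩ := Nat.exists_eq_add_one.2 (Nat.pos_of_ne_zero h₂')
  have key : r₄ * h₂ + a * h₁ + b * h₂ + r₁ * h₁ + k = 1 := by linarith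
  simp only [Nat.add_eq_one_iff, Nat.add_eq_zero_iff, mul_eq_zero] at key
  omega

theorem eq_of_conjWeight_add_eq {V : Type*} [AddCommMonoid V] {Λp : Finset V} (ht : V →+ ℕ)
    (htpos : ∀ l ∈ Λp, 1 ≤ ht l) {μ₁ μ₂ l₀ li : V} (hμ₁ : μ₁ ∈ Λp) (hμ₂ : μ₂ ∈ Λp)
    (hl₀ : l₀ ∈ Λp) (hlisimple : ht li = 1) (hsum : μ₁ + μ₂ + li = l₀)
    (huniq : ∀ α ∈ Λp, ht α = 1 → (μ₁ + μ₂ + α ∈ Λp ↔ α = li))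
    {l : V} {r : ℕ × ℕ × ℕ × ℕ} (hl : l ∈ Λp) (hr : r.2.1 ≠ 0 ∧ r.2.2.1 ≠ 0)
    (hw : conjWeight μ₁ μ₂ r + l = l₀) : (l, r) = (li, (0, 1, 1, 0)) := by
  obtain ⟨r₄, r₃, r₂, r₁⟩ := r
  have hht := congrArg ht hw
  rw [← hsum] at hht
  simp only [conjWeight, map_add, map_nsmul, smul_eq_mul, hlisimple] at hht
  obtain ⟨rfl, rfl, rfl, rfl, hl1⟩ :=
    counts_eq_of_height_eq (htpos μ₁ hμ₁) (htpos μ₂ hμ₂) (htpos l hl) hr.1 hr.2 hht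
  have hw' : μ₁ + μ₂ + l = l₀ := by
    rw [← hw, conjWeight]
    abel
  rw [(huniq l hl hl1).1 (hw' ▸ hl₀)]

theorem sum_filter_conjWeight_eq_lie {𝕜 V L : Type*} [Field 𝕜] [AddCommMonoid V]
    [DecidableEq V] [LieRing L] [LieAlgebra 𝕜 L] {Λp : Finset V} (ht : V →+ ℕ)
    (htpos : ∀ l ∈ Λp, 1 ≤ ht l)
    (Yc : V → L) {μ₁ μ₂ l₀ li : V} (hμ₁ : μ₁ ∈ Λp) (hμ₂ : μ₂ ∈ Λp) (hl₀ : l₀ ∈ Λp)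
    (hli : li ∈ Λp) (hlisimple : ht li = 1) (hsum : μ₁ + μ₂ + li = l₀)
    (huniq : ∀ α ∈ Λp, ht α = 1 → (μ₁ + μ₂ + α ∈ Λp ↔ α = li))
    {Z₁ Z₂ : L} {m : ℕ} (hnil : LieAlgebra.ad 𝕜 L Z₁ ^ m = 0) :
    ∑ i ∈ Λp ×ˢ (range m ×ˢ range m ×ˢ range m ×ˢ range m) with conjWeight μ₁ μ₂ i.2 + i.1 = l₀,
      conjCoeff 𝕜 i.2 • conjWord (LieAlgebra.ad 𝕜 L Z₁) (LieAlgebra.ad 𝕜 L Z₂)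
        (-LieAlgebra.ad 𝕜 L Z₁) (-LieAlgebra.ad 𝕜 L Z₂) i.2 (Yc i.1) = ⁅⁅Z₂, Z₁⁆, Yc li⁆ := by
  have hw₀ : conjWeight μ₁ μ₂ (0, 1, 1, 0) + li = l₀ := by
    rw [← hsum, conjWeight]
    abel
  rw [sum_eq_single (li, 0, 1, 1, 0)]
  · simp [conjCoeff, conjWord_lie_apply]
  · rintro ⟨l, r⟩ hi hne
    obtain ⟨⟨hl, -⟩, hw⟩ := by simpa only [mem_filter, mem_product] using hi
    by_cases hr : r.2.1 ≠ 0 ∧ r.2.2.1 ≠ 0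
    · exact absurd (eq_of_conjWeight_add_eq ht htpos hμ₁ hμ₂ hl₀ hlisimple hsum huniq hl hr hw) hne
    · rw [conjWord_eq_zero (by tauto), LinearMap.zero_apply, smul_zero]
  · intro hi₀
    have hm : m ≤ 1 := by
      by_contra! hm
      exact hi₀ (by simp [hli, hw₀, hm, zero_lt_one.trans hm])
    have hA : LieAlgebra.ad 𝕜 L Z₁ = 0 := by simpa using pow_eq_zero_of_le hm hnil
    simp [conjWord, hA]

theorem stmt_12_general (V : Type*) [AddCommMonoid V]
    (L : Type*) [LieRing L] [LieAlgebra ℝ L]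
    (Λp : Finset V) (g : V → Submodule ℝ L)
    (hbr : ∀ a b : V, a ∈ Λp → b ∈ Λp → ∀ x ∈ g a, ∀ y ∈ g b,
      (a + b ∈ Λp → ⁅x, y⁆ ∈ g (a + b)) ∧ (a + b ∉ Λp → ⁅x, y⁆ = (0 : L)))
    (ht : V → ℕ) (htadd : ∀ a b : V, ht (a + b) = ht a + ht b)
    (htpos : ∀ l ∈ Λp, 1 ≤ ht l)
    (Yc : V → L) (hYc : ∀ l ∈ Λp, Yc l ∈ g l)
    (μ₁ μ₂ : V) (hμ₁ : μ₁ ∈ Λp) (hμ₂ : μ₂ ∈ Λp)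
    (Z₁ Z₂ : L) (hZ₁ : Z₁ ∈ g μ₁) (hZ₂ : Z₂ ∈ g μ₂)
    (m : ℕ)
    (hnil₁ : ∀ w : L, (fun w => ⁅Z₁, w⁆)^[m] w = 0)
    (hnil₂ : ∀ w : L, (fun w => ⁅Z₂, w⁆)^[m] w = 0)
    -- the ordering on the positive roots and the distinguished root `l₀`
    (l₀ : V) (hl₀ : l₀ ∈ Λp)
    -- `{μ₁} + {μ₂} + Π = {l₀}`, witnessed by the simple root `li`
    (li : V) (hli : li ∈ Λp) (hlisimple : ht li = 1)
    (hsum : μ₁ + μ₂ + li = l₀)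
    (huniq : ∀ α ∈ Λp, ht α = 1 → (μ₁ + μ₂ + α ∈ Λp ↔ α = li)) :
    let E : L → L → L := fun A W =>
      ∑ r ∈ Finset.range m, ((r.factorial : ℝ))⁻¹ • (fun w => ⁅A, w⁆)^[r] W
    let Y : L := ∑ l ∈ Λp, Yc l
    let W : L := E (-Z₂) (E (-Z₁) (E Z₂ (E Z₁ Y)))
    ∃ C : V → L, (∀ l ∈ Λp, C l ∈ g l) ∧ W = ∑ l ∈ Λp, C l ∧
      C l₀ = ⁅⁅Z₂, Z₁⁆, Yc li⁆ + Yc l₀ := by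
  classical
  intro E Y W
  set A := LieAlgebra.ad ℝ L Z₁
  set B := LieAlgebra.ad ℝ L Z₂
  set f : V × ℕ × ℕ × ℕ × ℕ → L := fun i => conjCoeff ℝ i.2 • conjWord A B (-A) (-B) i.2 (Yc i.1)
  set s := Λp ×ˢ (range m ×ˢ range m ×ˢ range m ×ˢ range m)
  set wt : V × ℕ × ℕ × ℕ × ℕ → V := fun i => conjWeight μ₁ μ₂ i.2 + i.1
  have hW : W = Y + ∑ i ∈ s, f i := by
    have hconj : W = (truncExp ℝ (-B) m * truncExp ℝ (-A) m * truncExp ℝ B m *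
        truncExp ℝ A m) Y := by
      simp [W, E, sum_iterate_lie_eq_truncExp_apply, A, B]
    rw [hconj, truncExp_conj_apply_sum (ad_pow_eq_zero hnil₁) (ad_pow_eq_zero hnil₂)]
  have hf : ∀ i ∈ s, HasWeight Λp g (f i) (wt i) := by
    rintro ⟨l, r⟩ hi
    have hl : l ∈ Λp := (mem_product.1 hi).1
    have hA := shiftsWeight_ad hbr hμ₁ hZ₁
    have hB := shiftsWeight_ad hbr hμ₂ hZ₂
    exact (hA.conjWord hB hA.neg hB.neg r _ _ (hasWeight_of_mem hl (hYc l hl))).smul _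
  refine ⟨fun l => Yc l + ∑ i ∈ s with wt i = l, f i,
    fun l hl => add_mem (hYc l hl) (sum_filter_weight_mem hf hl), ?_, ?_⟩
  · rw [hW, sum_add_distrib, sum_sum_filter_weight hf]
  · show Yc l₀ + ∑ i ∈ s with wt i = l₀, f i = _
    rw [sum_filter_conjWeight_eq_lie ⟨⟨ht, by simpa using htadd 0 0⟩, htadd⟩ htpos Yc hμ₁ hμ₂
      hl₀ hli hlisimple hsum huniq (ad_pow_eq_zero hnil₁), add_comm]

/-- In the graded nilpotent setting, if all non-simple components `Y_{λ'}` with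
`λ' < l₀` vanish and `{μ₁} + {μ₂} + Π = {l₀}` (i.e. `μ₁ + μ₂ + α` is a root for a simple
root `α` only when `α = li`, giving `l₀`), then the `g_{l₀}`-component of
`e^{ad(−Z₂)}e^{ad(−Z₁)}e^{ad Z₂}e^{ad Z₁}(Y)` equals `[[Z₂,Z₁], Y_{li}] + Y_{l₀}`. -/
theorem stmt_12 (V : Type*) [AddCommMonoid V]
    (L : Type*) [LieRing L] [LieAlgebra ℝ L]
    (Λp : Finset V) (g : V → Submodule ℝ L)
    (hbr : ∀ a b : V, a ∈ Λp → b ∈ Λp → ∀ x ∈ g a, ∀ y ∈ g b,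
      (a + b ∈ Λp → ⁅x, y⁆ ∈ g (a + b)) ∧ (a + b ∉ Λp → ⁅x, y⁆ = (0 : L)))
    (ht : V → ℕ) (htadd : ∀ a b : V, ht (a + b) = ht a + ht b)
    (htpos : ∀ l ∈ Λp, 1 ≤ ht l)
    (Yc : V → L) (hYc : ∀ l ∈ Λp, Yc l ∈ g l)
    (μ₁ μ₂ : V) (hμ₁ : μ₁ ∈ Λp) (hμ₂ : μ₂ ∈ Λp)
    (Z₁ Z₂ : L) (hZ₁ : Z₁ ∈ g μ₁) (hZ₂ : Z₂ ∈ g μ₂)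
    (m : ℕ)
    (hnil₁ : ∀ w : L, (fun w => ⁅Z₁, w⁆)^[m] w = 0)
    (hnil₂ : ∀ w : L, (fun w => ⁅Z₂, w⁆)^[m] w = 0)
    -- the ordering on the positive roots and the distinguished root `l₀`
    (lt : V → V → Prop) (l₀ : V) (hl₀ : l₀ ∈ Λp)
    -- all non-simple components below `l₀` vanish
    (hzero : ∀ l' ∈ Λp, 2 ≤ ht l' → lt l' l₀ → Yc l' = 0)
    -- `{μ₁} + {μ₂} + Π = {l₀}`, witnessed by the simple root `li`
    (li : V) (hli : li ∈ Λp) (hlisimple : ht li = 1)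
    (hsum : μ₁ + μ₂ + li = l₀)
    (huniq : ∀ α ∈ Λp, ht α = 1 → (μ₁ + μ₂ + α ∈ Λp ↔ α = li)) :
    let E : L → L → L := fun A W =>
      ∑ r ∈ Finset.range m, ((r.factorial : ℝ))⁻¹ • (fun w => ⁅A, w⁆)^[r] W
    let Y : L := ∑ l ∈ Λp, Yc l
    let W : L := E (-Z₂) (E (-Z₁) (E Z₂ (E Z₁ Y)))
    ∃ C : V → L, (∀ l ∈ Λp, C l ∈ g l) ∧ W = ∑ l ∈ Λp, C l ∧
      C l₀ = ⁅⁅Z₂, Z₁⁆, Yc li⁆ + Yc l₀ :=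
  stmt_12_general V L Λp g hbr ht htadd htpos Yc hYc μ₁ μ₂ hμ₁ hμ₂ Z₁ Z₂ hZ₁ hZ₂ m hnil₁ hnil₂ l₀
    hl₀ li hli hlisimple hsum huniq
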